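/- arXiv:1907.07814 — 2 statements merged into one kernel-verified Lean document; each statement's English description precedes it below -/
import Mathlib

section
/- For m ≥ 1 let µ^w_m = µ^w(0̂, 1̂) computed in the partition lattice Π_m (so µ^w_1 = 1), and define the linear operator Δ on R[x] by Δp = Σ_{k ≥ 1} (µ^w_k / k!) · D^k p, where D is formal differentiation (the sum is finite on each polynomial). Then the zeta-type enumerators form the basic sequence of Δ: a_n(0; w) = 0 for every n ≥ 1, and Δ(a_n(x; w)) = n · a_{n−1}(x; w) for every n ≥ 1. -/
/-!
Write `Δ = ∑_{k ≥ 1} µ_k D⁽ᵏ⁾` with the Hasse derivatives `D⁽ᵏ⁾ Xᵐ = (m choose k) Xᵐ⁻ᵏ`. Since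
`µ_0 = 1`, `a_n + Δ a_n` is a sum over pairs `(π, S)` with `S` a set of blocks of `π`. Grouping by
`C = ⋃ S`, it factors as `∑_{C ⊆ [n]} a_{n - |C|} · ∑_{ρ ∈ Π(C)} w(0̂, ρ) µ_{|ρ|}`.
The interval `[ρ, 1̂]` of `Π_n` is isomorphic to `Π_{|ρ|}`, weights included, so
`µ^w(ρ, 1̂) = µ_{|ρ|}`. The inner sum is then the `(0̂, 1̂)` entry of `ζ µ`, and `ζ µ = 1` because
`µ ζ = 1` is the recursion defining `µ^w`. So the inner sum is `1` for `|C| ≤ 1` and `0` otherwise,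
and what is left is `a_n + n a_{n-1}`.
-/

open Finset

variable {R : Type*} [CommRing R] [Algebra ℚ R]

/-- The zeta-type weight `w(0̂, π) = ∏_{B a block of π} w(|B|)`. -/
noncomputable def zetaWeight (w : ℕ → R) {n : ℕ} (π : Finpartition (univ : Finset (Fin n))) : R :=
  ∏ B ∈ π.parts, w B.card

/-- The zeta-type enumerator `a_n(x; w)` as a polynomial. -/
noncomputable def aPoly (w : ℕ → R) (n : ℕ) : Polynomial R :=
  if n = 0 then 1 else
    ∑ π : Finpartition (univ : Finset (Fin n)),
      Polynomial.C (zetaWeight w π) * Polynomial.X ^ π.parts.card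

/-- The zeta-type function `w(τ, σ) = ∏_{B a block of σ} w(#{blocks of τ contained in B})`. -/
noncomputable def zetaRel (w : ℕ → R) {n : ℕ}
    (τ σ : Finpartition (univ : Finset (Fin n))) : R :=
  ∏ B ∈ σ.parts, w ((τ.parts.filter fun A => A ⊆ B).card)

open scoped Classical in
/-- The Möbius-type function: `µ^w(π, π) = 1` and
`µ^w(π, σ) = -∑_{π ≤ τ < σ} µ^w(π, τ) w(τ, σ)` for `π < σ`. -/
noncomputable def muW (w : ℕ → R) {n : ℕ} (π : Finpartition (univ : Finset (Fin n)))
    (σ : Finpartition (univ : Finset (Fin n))) : R :=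
  if π = σ then 1
  else -∑ τ ∈ (Finset.univ.filter fun τ => π ≤ τ ∧ τ < σ).attach,
        muW w π τ.1 * zetaRel w τ.1 σ
termination_by (Finset.univ.filter fun τ => τ < σ).card
decreasing_by
  classical
  obtain ⟨-, hτσ⟩ := (Finset.mem_filter.mp τ.2).2
  apply Finset.card_lt_card
  constructor
  · intro x hx
    simp only [Finset.mem_filter, Finset.mem_univ, true_and] at hx ⊢
    exact hx.trans hτσ
  · intro hsub
    have hτ : τ.1 ∈ Finset.univ.filter fun x => x < σ := by simp [hτσ]
    have := hsub hτ
    simp at this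

/-- `µ^w_m = µ^w(0̂, 1̂)` computed in the partition lattice `Π_m` (for `m ≥ 1`);
in particular `µ^w_1 = 1`. -/
noncomputable def muTop (w : ℕ → R) : ℕ → R
  | 0 => 1
  | (m + 1) =>
      muW w ⊥ (Finpartition.indiscrete
        (by simp [Finset.bot_eq_empty, ← Finset.nonempty_iff_ne_empty] :
          (univ : Finset (Fin (m + 1))) ≠ ⊥))

/-- The operator `p ↦ ∑_{k ≥ 1} (c k / k!) D^k p` on `R[x]`, where `D` is formal
differentiation; the sum is finite on each polynomial since `D^k p = 0` for
`k > deg p`. -/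
noncomputable def opOf (c : ℕ → R) (p : Polynomial R) : Polynomial R :=
  ∑ k ∈ Finset.Icc 1 p.natDegree,
    (algebraMap ℚ R (1 / k.factorial) * c k) • (Polynomial.derivative^[k] p)

open Polynomial

section Embed

variable {α β : Type*} [DecidableEq α] [DecidableEq β] {s : Finset α}

def Finpartition.embed (f : α ↪ β) (P : Finpartition s) : Finpartition (s.map f) where
  parts := P.parts.map (mapEmbedding f).toEmbedding
  supIndep := by
    rw [supIndep_iff_pairwiseDisjoint, coe_map]
    rintro _ ⟨A, hA, rfl⟩ _ ⟨B, hB, rfl⟩ hAB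
    simpa [Function.onFun] using P.disjoint hA hB fun h => hAB (by rw [h])
  sup_parts := by
    ext y
    simp only [mem_sup, mem_map, RelEmbedding.coe_toEmbedding, mapEmbedding_apply, id_eq,
      exists_exists_and_eq_and]
    constructor
    · rintro ⟨A, hA, x, hx, rfl⟩
      exact ⟨x, P.le hA hx, rfl⟩
    · rintro ⟨x, hx, rfl⟩
      obtain ⟨A, hA, hxA⟩ := P.exists_mem hx
      exact ⟨A, hA, x, hxA, rfl⟩
  bot_notMem := by
    simp [bot_eq_empty]

@[simp]
lemma Finpartition.embed_parts (f : α ↪ β) (P : Finpartition s) :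
    (P.embed f).parts = P.parts.map (mapEmbedding f).toEmbedding := rfl

lemma Finpartition.embed_injective (f : α ↪ β) :
    Function.Injective (Finpartition.embed (s := s) f) := fun _ _ h =>
  Finpartition.ext (map_injective _ (congrArg Finpartition.parts h))

lemma Finpartition.embed_surjective (f : α ↪ β) :
    Function.Surjective (Finpartition.embed (s := s) f) := by
  intro Q
  have hpre {B : Finset β} (hB : B ∈ Q.parts) : (s.filter (f · ∈ B)).map f = B := by
    ext y
    simp only [mem_map, mem_filter]
    refine ⟨fun ⟨x, ⟨_, hx⟩, hxy⟩ => hxy ▸ hx, fun hy => ?_⟩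
    obtain ⟨x, hx, rfl⟩ := mem_map.1 (Q.le hB hy)
    exact ⟨x, ⟨hx, hy⟩, rfl⟩
  refine ⟨⟨Q.parts.image fun B => s.filter (f · ∈ B), ?_, ?_, ?_⟩, Finpartition.ext ?_⟩
  · rw [supIndep_iff_pairwiseDisjoint, coe_image]
    rintro _ ⟨A, hA, rfl⟩ _ ⟨B, hB, rfl⟩ hAB
    exact disjoint_filter.2 fun x _ hxA hxB => hAB (by rw [Q.eq_of_mem_parts hA hB hxA hxB])
  · ext x
    simp only [mem_sup, mem_image, id_eq, exists_exists_and_eq_and, mem_filter]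
    refine ⟨fun ⟨_, _, hx, _⟩ => hx, fun hx => ?_⟩
    obtain ⟨B, hB, hxB⟩ := Q.exists_mem (mem_map_of_mem f hx)
    exact ⟨B, hB, hx, hxB⟩
  · rw [mem_image]
    rintro ⟨B, hB, hbot⟩
    apply Q.bot_notMem
    rwa [bot_eq_empty, ← map_empty f, ← bot_eq_empty, ← hbot, hpre hB]
  · simp only [embed_parts, map_eq_image, image_image]
    exact (image_congr fun B hB => hpre hB).trans image_id'

lemma Finpartition.sum_embed {M : Type*} [AddCommMonoid M] {t : Finset β} (f : α ↪ β)
    (h : s.map f = t) (F : Finpartition t → M) :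
    ∑ Q, F Q = ∑ P : Finpartition s, F ((P.embed f).copy h) := by
  subst h
  exact (Fintype.sum_bijective _ ⟨embed_injective f, embed_surjective f⟩ _ _ fun _ => rfl).symm

lemma sum_finpartition_eq_sum_fin {A M : Type*} [CommMonoid A] [AddCommMonoid M] (w : ℕ → A)
    (s : Finset α) (F : A → ℕ → M) :
    ∑ P : Finpartition s, F (∏ B ∈ P.parts, w #B) #P.parts =
      ∑ P : Finpartition (univ : Finset (Fin #s)), F (∏ B ∈ P.parts, w #B) #P.parts := by
  have hs : univ.map (s.equivFin.symm.toEmbedding.trans (Function.Embedding.subtype _)) = s := by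
    rw [← map_map, univ_map_equiv_to_embedding, univ_eq_attach, attach_map_val]
  rw [Finpartition.sum_embed _ hs]
  simp [prod_map]

end Embed

section Split

variable {α : Type*} [DecidableEq α] {u C : Finset α}

def Finpartition.union (σ : Finpartition (u \ C)) (ρ : Finpartition C) (hC : C ⊆ u) :
    Finpartition u where
  parts := σ.parts ∪ ρ.parts
  supIndep := by
    rw [supIndep_iff_pairwiseDisjoint, coe_union, Set.pairwiseDisjoint_union]
    refine ⟨supIndep_iff_pairwiseDisjoint.1 σ.supIndep,
      supIndep_iff_pairwiseDisjoint.1 ρ.supIndep, fun A hA B hB _ => ?_⟩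
    exact disjoint_sdiff_self_left.mono (σ.le hA) (ρ.le hB)
  sup_parts := by
    rw [sup_union, σ.sup_parts, ρ.sup_parts, sup_eq_union, sdiff_union_of_subset hC]
  bot_notMem h := (mem_union.1 h).elim σ.bot_notMem ρ.bot_notMem

@[simp]
lemma Finpartition.union_parts (σ : Finpartition (u \ C)) (ρ : Finpartition C) (hC : C ⊆ u) :
    (σ.union ρ hC).parts = σ.parts ∪ ρ.parts := rfl

lemma Finpartition.disjoint_parts_sdiff (σ : Finpartition (u \ C)) (ρ : Finpartition C) :
    Disjoint σ.parts ρ.parts := by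
  refine disjoint_left.2 fun B hσ hρ => σ.ne_bot hσ ?_
  exact disjoint_self.1 (disjoint_sdiff_self_left.mono (σ.le hσ) (ρ.le hρ))

lemma Finpartition.sup_parts_sdiff (π : Finpartition u) {S : Finset (Finset α)}
    (hS : S ⊆ π.parts) : (π.parts \ S).sup id = u \ S.sup id := by
  ext x
  simp only [mem_sup, mem_sdiff, id_eq, not_exists, not_and]
  constructor
  · rintro ⟨B, ⟨hB, hBS⟩, hxB⟩
    exact ⟨π.le hB hxB, fun B' hB' hxB' => hBS (π.eq_of_mem_parts hB (hS hB') hxB hxB' ▸ hB')⟩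
  · rintro ⟨hx, hxS⟩
    obtain ⟨B, hB, hxB⟩ := π.exists_mem hx
    exact ⟨B, ⟨hB, fun hBS => hxS B hBS hxB⟩, hxB⟩

lemma Finpartition.sum_sum_powerset_parts {M : Type*} [AddCommMonoid M] (u : Finset α)
    (f : Finset (Finset α) → Finset (Finset α) → M) :
    ∑ π : Finpartition u, ∑ S ∈ π.parts.powerset, f (π.parts \ S) S =
      ∑ C ∈ u.powerset, ∑ σ : Finpartition (u \ C), ∑ ρ : Finpartition C, f σ.parts ρ.parts := by
  have hsup (π : Finpartition u) (S) (hS : S ∈ π.parts.powerset) : S.sup id ∈ u.powerset :=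
    mem_powerset.2 (π.sup_parts ▸ sup_mono (mem_powerset.1 hS))
  rw [sum_congr rfl fun π _ => (sum_fiberwise_of_maps_to (hsup π) _).symm, sum_comm]
  refine sum_congr rfl fun C hC => ?_
  rw [mem_powerset] at hC
  rw [sum_sigma', ← Fintype.sum_prod_type']
  have hmem {x : Σ _ : Finpartition u, Finset (Finset α)}
      (hx : x ∈ univ.sigma fun π => {S ∈ π.parts.powerset | S.sup id = C}) :
      x.2 ⊆ x.1.parts ∧ x.2.sup id = C := by
    simpa using hx
  refine (sum_bij' (fun p _ => ⟨p.1.union p.2 hC, p.2.parts⟩)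
    (fun x hx => (x.1.ofSubset sdiff_subset
        ((x.1.sup_parts_sdiff (hmem hx).1).trans (by rw [(hmem hx).2])),
      x.1.ofSubset (hmem hx).1 (hmem hx).2))
    (fun p _ => ?_) (fun _ _ => mem_univ _) (fun p _ => ?_) (fun x hx => ?_) (fun p _ => ?_)).symm
  · exact mem_sigma.2 ⟨mem_univ _, mem_filter.2 ⟨mem_powerset.2 subset_union_right, p.2.sup_parts⟩⟩
  · refine Prod.ext (Finpartition.ext ?_) (Finpartition.ext rfl)
    exact union_sdiff_cancel_right (p.1.disjoint_parts_sdiff p.2)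
  · refine Sigma.ext (Finpartition.ext ?_) HEq.rfl
    exact sdiff_union_of_subset (hmem hx).1
  · simp only [Finpartition.union_parts, union_sdiff_cancel_right (p.1.disjoint_parts_sdiff p.2)]

end Split

section Glue

variable {α ι : Type*} [DecidableEq α] {s : Finset α} {P : Finpartition s} (e : ι ≃ P.parts)

lemma exists_mem_equiv_parts_iff {x : α} : (∃ i, x ∈ (e i : Finset α)) ↔ x ∈ s := by
  refine ⟨fun ⟨i, hi⟩ => P.le (e i).2 hi, fun hx => ?_⟩
  obtain ⟨B, hB, hxB⟩ := P.exists_mem hx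
  exact ⟨e.symm ⟨B, hB⟩, by simpa using hxB⟩

lemma biUnion_equiv_parts_subset_iff {I J : Finset ι} :
    I.biUnion (fun i => (e i : Finset α)) ⊆ J.biUnion (fun i => e i) ↔ I ⊆ J := by
  refine ⟨fun h i hi => ?_, biUnion_subset_biUnion_of_subset_left _⟩
  obtain ⟨x, hx⟩ := P.nonempty_of_mem_parts (e i).2
  obtain ⟨j, hj, hxj⟩ := mem_biUnion.1 (h (mem_biUnion.2 ⟨i, hi, hx⟩))
  rwa [e.injective (Subtype.ext (P.eq_of_mem_parts (e i).2 (e j).2 hx hxj))]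

lemma biUnion_equiv_parts_injective :
    Function.Injective fun I : Finset ι => I.biUnion fun i => (e i : Finset α) := fun _ _ h =>
  ((biUnion_equiv_parts_subset_iff e).1 h.le).antisymm
    ((biUnion_equiv_parts_subset_iff e).1 h.ge)

lemma exists_equiv_parts_mem_subset {τ : Finpartition s} (hτ : P ≤ τ) {B : Finset α}
    (hB : B ∈ τ.parts) {x : α} (hx : x ∈ B) : ∃ i, x ∈ (e i : Finset α) ∧ (e i : Finset α) ⊆ B := by
  obtain ⟨i, hxi⟩ := (exists_mem_equiv_parts_iff e).2 (τ.le hB hx)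
  obtain ⟨C, hC, hiC⟩ := hτ (e i).2
  exact ⟨i, hxi, τ.eq_of_mem_parts hB hC hx (hiC hxi) ▸ hiC⟩

variable [Fintype ι] [DecidableEq ι]

def Finpartition.glue (Q : Finpartition (univ : Finset ι)) : Finpartition s where
  parts := Q.parts.image fun I => I.biUnion fun i => e i
  supIndep := by
    rw [supIndep_iff_pairwiseDisjoint, coe_image]
    rintro _ ⟨I, hI, rfl⟩ _ ⟨J, hJ, rfl⟩ hIJ
    simp only [Function.onFun, id, disjoint_biUnion_left, disjoint_biUnion_right]
    intro j hj i hi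
    have hij : i ≠ j := by
      rintro rfl
      exact hIJ (by rw [Q.eq_of_mem_parts hI hJ hi hj])
    exact P.disjoint (e i).2 (e j).2 fun h => hij (e.injective (Subtype.ext h))
  sup_parts := by
    ext x
    rw [← exists_mem_equiv_parts_iff e, sup_image, Function.id_comp, mem_sup]
    simp only [mem_biUnion]
    exact ⟨fun ⟨_, _, i, _, hx⟩ => ⟨i, hx⟩, fun ⟨i, hx⟩ =>
      let ⟨I, hI, hiI⟩ := Q.exists_mem (mem_univ i); ⟨I, hI, i, hiI, hx⟩⟩
  bot_notMem := by
    rw [mem_image]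
    rintro ⟨I, hI, hbot⟩
    obtain ⟨i, hi⟩ := Q.nonempty_of_mem_parts hI
    obtain ⟨x, hx⟩ := P.nonempty_of_mem_parts (e i).2
    have hxI : x ∈ I.biUnion fun i => (e i : Finset α) := mem_biUnion.2 ⟨i, hi, hx⟩
    rw [hbot] at hxI
    exact notMem_empty x hxI

@[simp]
lemma Finpartition.glue_parts (Q : Finpartition (univ : Finset ι)) :
    (Finpartition.glue e Q).parts = Q.parts.image fun I => I.biUnion fun i => e i := rfl

lemma Finpartition.glue_le_glue_iff {Q Q' : Finpartition (univ : Finset ι)} :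
    Finpartition.glue e Q ≤ Finpartition.glue e Q' ↔ Q ≤ Q' := by
  constructor
  · intro h I hI
    obtain ⟨_, hB, hsub⟩ := h (mem_image_of_mem _ hI)
    obtain ⟨J, hJ, rfl⟩ := mem_image.1 hB
    exact ⟨J, hJ, (biUnion_equiv_parts_subset_iff e).1 hsub⟩
  · rintro h _ hB
    obtain ⟨I, hI, rfl⟩ := mem_image.1 hB
    obtain ⟨J, hJ, hIJ⟩ := h hI
    exact ⟨_, mem_image_of_mem _ hJ, (biUnion_equiv_parts_subset_iff e).2 hIJ⟩

lemma Finpartition.glue_bot : Finpartition.glue e ⊥ = P := by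
  ext B
  simp only [glue_parts, parts_bot, mem_image, mem_map, mem_univ, true_and,
    Function.Embedding.coeFn_mk, exists_exists_eq_and, singleton_biUnion]
  exact ⟨fun ⟨i, hi⟩ => hi ▸ (e i).2, fun hB => ⟨e.symm ⟨B, hB⟩, by simp⟩⟩

lemma Finpartition.glue_indiscrete (hι : (univ : Finset ι) ≠ ⊥) (hs : s ≠ ⊥) :
    Finpartition.glue e (indiscrete hι) = indiscrete hs := by
  ext B
  have : (univ : Finset ι).biUnion (fun i => (e i : Finset α)) = s := by
    ext x
    simp [exists_mem_equiv_parts_iff e]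
  simp [this]

def Finpartition.unglue {τ : Finpartition s} (hτ : P ≤ τ) : Finpartition (univ : Finset ι) where
  parts := τ.parts.image fun B => univ.filter fun i => (e i : Finset α) ⊆ B
  supIndep := by
    rw [supIndep_iff_pairwiseDisjoint, coe_image]
    rintro _ ⟨B, hB, rfl⟩ _ ⟨C, hC, rfl⟩ hBC
    refine disjoint_filter.2 fun i _ hiB hiC => hBC ?_
    obtain ⟨x, hx⟩ := P.nonempty_of_mem_parts (e i).2
    rw [τ.eq_of_mem_parts hB hC (hiB hx) (hiC hx)]
  sup_parts := by
    refine eq_univ_of_forall fun i => mem_sup.2 ?_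
    obtain ⟨B, hB, hiB⟩ := hτ (e i).2
    exact ⟨_, mem_image_of_mem _ hB, mem_filter.2 ⟨mem_univ i, hiB⟩⟩
  bot_notMem := by
    rw [mem_image]
    rintro ⟨B, hB, hbot⟩
    obtain ⟨x, hx⟩ := τ.nonempty_of_mem_parts hB
    obtain ⟨i, -, hiB⟩ := exists_equiv_parts_mem_subset e hτ hB hx
    have hi : i ∈ univ.filter fun i => (e i : Finset α) ⊆ B := mem_filter.2 ⟨mem_univ i, hiB⟩
    rw [hbot] at hi
    exact notMem_empty i hi

lemma Finpartition.glue_unglue {τ : Finpartition s} (hτ : P ≤ τ) :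
    Finpartition.glue e (Finpartition.unglue e hτ) = τ := by
  refine Finpartition.ext ?_
  rw [glue_parts, unglue, image_image]
  refine (image_congr fun B hB => ?_).trans image_id'
  refine (biUnion_subset.2 fun i hi => (mem_filter.1 hi).2).antisymm fun x hx => ?_
  obtain ⟨i, hxi, hiB⟩ := exists_equiv_parts_mem_subset e hτ hB hx
  exact mem_biUnion.2 ⟨i, mem_filter.2 ⟨mem_univ i, hiB⟩, hxi⟩

end Glue

section Incidence

def incidenceMatrix {P A : Type*} [LE P] [DecidableLE P] [Zero A] (f : P → P → A) :
    Matrix P P A :=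
  fun a b => if a ≤ b then f a b else 0

lemma incidenceMatrix_mul_apply {P A : Type*} [Fintype P] [LE P] [DecidableLE P]
    [NonUnitalNonAssocSemiring A]
    (f g : P → P → A) (a b : P) :
    (incidenceMatrix f * incidenceMatrix g) a b = ∑ c with a ≤ c ∧ c ≤ b, f a c * g c b := by
  simp only [Matrix.mul_apply, incidenceMatrix, ite_zero_mul_ite_zero, sum_ite, sum_const_zero,
    add_zero]

open scoped Classical

variable {A : Type*} [CommRing A] {n : ℕ}

lemma muW_self (w : ℕ → A) (π : Finpartition (univ : Finset (Fin n))) : muW w π π = 1 := by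
  rw [muW, if_pos rfl]

lemma muW_of_ne (w : ℕ → A) {π σ : Finpartition (univ : Finset (Fin n))} (h : π ≠ σ) :
    muW w π σ = -∑ τ with π ≤ τ ∧ τ < σ, muW w π τ * zetaRel w τ σ := by
  rw [muW, if_neg h, sum_attach _ fun τ => muW w π τ * zetaRel w τ σ]

lemma zetaRel_self {w : ℕ → A} (hw : w 1 = 1) (π : Finpartition (univ : Finset (Fin n))) :
    zetaRel w π π = 1 := by
  refine prod_eq_one fun B hB => ?_
  have : {D ∈ π.parts | D ⊆ B} = {B} := by
    refine eq_singleton_iff_unique_mem.2 ⟨mem_filter.2 ⟨hB, subset_rfl⟩, fun D hD => ?_⟩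
    obtain ⟨hD, hDB⟩ := mem_filter.1 hD
    obtain ⟨x, hx⟩ := π.nonempty_of_mem_parts hD
    exact π.eq_of_mem_parts hD hB hx (hDB hx)
  rw [this, card_singleton, hw]

lemma zetaRel_bot (w : ℕ → A) (ρ : Finpartition (univ : Finset (Fin n))) :
    zetaRel w ⊥ ρ = zetaWeight w ρ := by
  refine prod_congr rfl fun B _ => congrArg w ?_
  have : {D ∈ (⊥ : Finpartition (univ : Finset (Fin n))).parts | D ⊆ B} =
      B.map ⟨singleton, singleton_injective⟩ := by
    ext D
    simp only [Finpartition.parts_bot, mem_filter, mem_map, mem_univ, true_and,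
      Function.Embedding.coeFn_mk]
    constructor
    · rintro ⟨⟨x, rfl⟩, hx⟩
      exact ⟨x, singleton_subset_iff.1 hx, rfl⟩
    · rintro ⟨x, hx, rfl⟩
      exact ⟨⟨x, rfl⟩, singleton_subset_iff.2 hx⟩
  rw [this, card_map]

lemma sum_muW_mul_zetaRel {w : ℕ → A} (hw : w 1 = 1) (π σ : Finpartition (univ : Finset (Fin n))) :
    ∑ τ with π ≤ τ ∧ τ ≤ σ, muW w π τ * zetaRel w τ σ = if π = σ then 1 else 0 := by
  by_cases hπσ : π ≤ σ
  · have hsplit : univ.filter (fun τ => π ≤ τ ∧ τ ≤ σ) =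
        insert σ (univ.filter fun τ => π ≤ τ ∧ τ < σ) := by
      ext τ
      simp only [mem_filter, mem_univ, true_and, mem_insert, le_iff_lt_or_eq (b := σ)]
      constructor
      · rintro ⟨h, hlt | rfl⟩ <;> simp_all
      · rintro (rfl | h) <;> simp_all
    rw [hsplit, sum_insert (by simp), zetaRel_self hw, mul_one]
    split_ifs with h
    · subst h
      rw [muW_self, add_eq_left, filter_false_of_mem fun τ _ h => (h.1.trans_lt h.2).false,
        sum_empty]
    · rw [muW_of_ne w h, neg_add_cancel]
  · rw [if_neg (fun h => hπσ h.le), sum_eq_zero]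
    intro τ hτ
    simp only [mem_filter] at hτ
    exact absurd (hτ.2.1.trans hτ.2.2) hπσ

lemma sum_zetaRel_mul_muW {w : ℕ → A} (hw : w 1 = 1) (π σ : Finpartition (univ : Finset (Fin n))) :
    ∑ τ with π ≤ τ ∧ τ ≤ σ, zetaRel w π τ * muW w τ σ = if π = σ then 1 else 0 := by
  have hμζ : incidenceMatrix (muW (n := n) w) * incidenceMatrix (zetaRel w) = 1 := by
    ext π σ
    rw [incidenceMatrix_mul_apply, Matrix.one_apply, sum_muW_mul_zetaRel hw]
  rw [← incidenceMatrix_mul_apply, mul_eq_one_comm.1 hμζ, Matrix.one_apply]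

end Incidence

section FinpartitionFin

lemma univ_fin_ne_bot {n : ℕ} (hn : n ≠ 0) : (univ : Finset (Fin n)) ≠ ⊥ := by
  rw [Finset.bot_eq_empty, ← Finset.nonempty_iff_ne_empty, Finset.univ_nonempty_iff]
  exact ⟨⟨0, Nat.pos_of_ne_zero hn⟩⟩

lemma sum_finpartition_fin_zero {M : Type*} [AddCommMonoid M]
    (F : Finpartition (univ : Finset (Fin 0)) → M) : ∑ π, F π = F ⊥ :=
  have : Subsingleton (Finpartition (univ : Finset (Fin 0))) :=
    ⟨fun π ρ => Finpartition.ext (by rw [π.parts_eq_empty_iff.2 (by simp),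
      ρ.parts_eq_empty_iff.2 (by simp)])⟩
  Fintype.sum_subsingleton _ ⊥

end FinpartitionFin

section MoebiusTransport

open scoped Classical

variable {A : Type*} [CommRing A] {m n : ℕ}

lemma zetaRel_glue (w : ℕ → A) {P : Finpartition (univ : Finset (Fin n))} (e : Fin m ≃ P.parts)
    (a b : Finpartition (univ : Finset (Fin m))) :
    zetaRel w (Finpartition.glue e a) (Finpartition.glue e b) = zetaRel w a b := by
  have hinj := biUnion_equiv_parts_injective e
  simp only [zetaRel, Finpartition.glue_parts]
  rw [prod_image fun _ _ _ _ h => hinj h]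
  refine prod_congr rfl fun J _ => congrArg w ?_
  rw [filter_image, card_image_of_injective _ hinj]
  simp only [biUnion_equiv_parts_subset_iff]

lemma muW_bot_eq_of_orderEmbedding (w : ℕ → A)
    (Φ : Finpartition (univ : Finset (Fin m)) ↪o Finpartition (univ : Finset (Fin n)))
    (hsurj : ∀ τ, Φ ⊥ ≤ τ → ∃ a, Φ a = τ) (hζ : ∀ a b, zetaRel w (Φ a) (Φ b) = zetaRel w a b)
    (σ : Finpartition (univ : Finset (Fin m))) :
    muW w ⊥ σ = muW w (Φ ⊥) (Φ σ) := by
  induction σ using WellFoundedLT.induction with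
  | _ σ ih =>
    by_cases hσ : ⊥ = σ
    · rw [← hσ, muW_self, muW_self]
    rw [muW_of_ne w hσ, muW_of_ne w (Φ.injective.ne hσ)]
    congr 1
    refine sum_bij (fun a _ => Φ a) (fun a ha => ?_) (fun _ _ _ _ h => Φ.injective h)
      (fun τ hτ => ?_) (fun a ha => ?_)
    · simpa only [mem_filter, mem_univ, true_and, Φ.le_iff_le, Φ.lt_iff_lt] using ha
    · simp only [mem_filter, mem_univ, true_and] at hτ
      obtain ⟨a, rfl⟩ := hsurj τ hτ.1
      exact ⟨a, by simpa [Φ.lt_iff_lt] using hτ.2, rfl⟩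
    · rw [ih a (mem_filter.1 ha).2.2, hζ]

lemma muTop_eq_muW (w : ℕ → A) (hm : m ≠ 0) :
    muTop w m = muW w ⊥ (Finpartition.indiscrete (univ_fin_ne_bot hm)) := by
  obtain ⟨k, rfl⟩ := Nat.exists_eq_succ_of_ne_zero hm
  rfl

lemma muW_indiscrete (w : ℕ → A) (hn : (univ : Finset (Fin n)) ≠ ⊥)
    (ρ : Finpartition (univ : Finset (Fin n))) :
    muW w ρ (Finpartition.indiscrete hn) = muTop w #ρ.parts := by
  have hm : #ρ.parts ≠ 0 := card_ne_zero.2 (ρ.parts_nonempty hn)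
  let e := ρ.parts.equivFin.symm
  let Φ := OrderEmbedding.ofMapLEIff (Finpartition.glue e) fun _ _ =>
    Finpartition.glue_le_glue_iff e
  have hΦbot : Φ ⊥ = ρ := Finpartition.glue_bot e
  have hΦ := muW_bot_eq_of_orderEmbedding w Φ
    (fun τ hτ => ⟨_, Finpartition.glue_unglue e (hΦbot ▸ hτ)⟩)
    (zetaRel_glue w e) (Finpartition.indiscrete (univ_fin_ne_bot hm))
  rw [muTop_eq_muW w hm, hΦ, hΦbot]
  exact congrArg _ (Finpartition.glue_indiscrete e _ hn).symm

lemma bot_eq_indiscrete_iff (hn : (univ : Finset (Fin n)) ≠ ⊥) :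
    ⊥ = Finpartition.indiscrete hn ↔ n = 1 := by
  refine ⟨fun h => by simpa using congrArg (fun π => #π.parts) h, ?_⟩
  rintro rfl
  ext B
  simp [Finpartition.parts_bot, univ_unique]

lemma sum_zetaWeight_mul_muTop {w : ℕ → A} (hw : w 1 = 1) (n : ℕ) :
    ∑ ρ : Finpartition (univ : Finset (Fin n)), zetaWeight w ρ * muTop w #ρ.parts =
      if n ≤ 1 then 1 else 0 := by
  rcases Nat.eq_zero_or_pos n with rfl | hn
  · simp [sum_finpartition_fin_zero, zetaWeight, muTop]
  have hne := univ_fin_ne_bot hn.ne'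
  have h := sum_zetaRel_mul_muW hw ⊥ (Finpartition.indiscrete hne)
  simp only [bot_le, true_and, bot_eq_indiscrete_iff, zetaRel_bot, muW_indiscrete] at h
  rw [filter_true_of_mem fun ρ _ B _ => ⟨univ, by simp, subset_univ B⟩] at h
  rw [h]
  exact if_congr (by omega) rfl rfl

end MoebiusTransport

section Operator

lemma opOf_eq_sum_hasseDeriv (c : ℕ → R) (p : R[X]) :
    opOf c p = ∑ k ∈ Icc 1 p.natDegree, c k • hasseDeriv k p := by
  refine sum_congr rfl fun k _ => ?_
  have hk : algebraMap ℚ R (1 / k.factorial) * (k.factorial : R) = 1 := by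
    rw [← map_natCast (algebraMap ℚ R), ← map_mul, one_div_mul_cancel (by positivity), map_one]
  rw [← congrFun (factorial_smul_hasseDeriv (R := R) k) p, LinearMap.smul_apply,
    ← Nat.cast_smul_eq_nsmul R, smul_smul, mul_right_comm, hk, one_mul]

lemma add_opOf_eq_sum_hasseDeriv (c : ℕ → R) (hc : c 0 = 1) (p : R[X]) {N : ℕ}
    (hN : p.natDegree ≤ N) :
    p + opOf c p = ∑ k ∈ range (N + 1), c k • hasseDeriv k p := by
  have hvanish : ∀ k ∈ range (N + 1), k ∉ range (p.natDegree + 1) → c k • hasseDeriv k p = 0 :=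
    fun k _ hk => by
      rw [hasseDeriv_eq_zero_of_lt_natDegree p k (by simpa using hk), smul_zero]
  rw [← sum_subset (range_subset_range.2 (by omega)) hvanish, range_eq_Ico,
    sum_eq_sum_Ico_succ_bot (by omega), zero_add, Ico_add_one_right_eq_Icc,
    opOf_eq_sum_hasseDeriv, hc, hasseDeriv_zero', one_smul]

lemma sum_smul_hasseDeriv_C_mul_X_pow_card {A β : Type*} [CommSemiring A] (c : ℕ → A) (a : A)
    (x : Finset β) {N : ℕ} (hN : #x ≤ N) :
    ∑ k ∈ range (N + 1), c k • hasseDeriv k (C a * X ^ #x) =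
      ∑ S ∈ x.powerset, C (a * c #S) * X ^ (#x - #S) := by
  have hterm : ∀ k, c k • hasseDeriv k (C a * X ^ #x) =
      (#x).choose k • (C (a * c k) * X ^ (#x - k)) := by
    intro k
    rw [C_mul_X_pow_eq_monomial, hasseDeriv_monomial, smul_monomial, ← C_mul_X_pow_eq_monomial,
      nsmul_eq_mul, ← mul_assoc, ← C_eq_natCast, ← C_mul, smul_eq_mul]
    ring_nf
  rw [sum_powerset_apply_card (fun k => C (a * c k) * X ^ (#x - k)),
    sum_congr rfl fun k _ => hterm k]
  refine (sum_subset (range_subset_range.2 (by omega)) fun k _ hk => ?_).symm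
  rw [Nat.choose_eq_zero_of_lt (by simpa using hk), zero_smul]

end Operator

section Enumerator

lemma aPoly_eq_sum {A : Type*} [CommRing A] (w : ℕ → A) (n : ℕ) :
    aPoly w n = ∑ π : Finpartition (univ : Finset (Fin n)), C (zetaWeight w π) * X ^ #π.parts := by
  rcases Nat.eq_zero_or_pos n with rfl | hn
  · simp [aPoly, sum_finpartition_fin_zero, zetaWeight]
  · rw [aPoly, if_neg hn.ne']

lemma natDegree_aPoly_le {A : Type*} [CommRing A] (w : ℕ → A) (n : ℕ) :
    (aPoly w n).natDegree ≤ n := by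
  rw [aPoly_eq_sum]
  refine natDegree_sum_le_of_forall_le _ _ fun π _ => (natDegree_C_mul_X_pow_le _ _).trans ?_
  simpa using π.card_parts_le_card

lemma aPoly_add_opOf_muTop_eq_sum (w : ℕ → R) (n : ℕ) :
    aPoly w n + opOf (muTop w) (aPoly w n) =
      ∑ π : Finpartition (univ : Finset (Fin n)), ∑ S ∈ π.parts.powerset,
        C (∏ B ∈ π.parts \ S, w #B) * X ^ #(π.parts \ S) * C ((∏ B ∈ S, w #B) * muTop w #S) := by
  rw [add_opOf_eq_sum_hasseDeriv _ rfl _ (natDegree_aPoly_le w n), aPoly_eq_sum]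
  simp_rw [map_sum, smul_sum]
  rw [sum_comm]
  refine sum_congr rfl fun π _ => ?_
  rw [sum_smul_hasseDeriv_C_mul_X_pow_card _ _ _ (by simpa using π.card_parts_le_card)]
  refine sum_congr rfl fun S hS => ?_
  rw [mem_powerset] at hS
  rw [card_sdiff_of_subset hS, zetaWeight, ← prod_sdiff hS, mul_assoc, C_mul, C_mul]
  ring

lemma eval_zero_aPoly {A : Type*} [CommRing A] (w : ℕ → A) {n : ℕ} (hn : n ≠ 0) :
    (aPoly w n).eval 0 = 0 := by
  rw [aPoly_eq_sum, eval_finsetSum]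
  refine sum_eq_zero fun π _ => ?_
  have : #π.parts ≠ 0 := card_ne_zero.2 (π.parts_nonempty (univ_fin_ne_bot hn))
  simp [zero_pow this]

end Enumerator

section Main

lemma sum_finpartition_prod_mul_muTop {A α : Type*} [CommRing A] [DecidableEq α] {w : ℕ → A}
    (hw : w 1 = 1) (s : Finset α) :
    ∑ ρ : Finpartition s, (∏ B ∈ ρ.parts, w #B) * muTop w #ρ.parts = if #s ≤ 1 then 1 else 0 := by
  rw [sum_finpartition_eq_sum_fin w s fun a k => a * muTop w k]
  exact sum_zetaWeight_mul_muTop hw _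

lemma sum_finpartition_C_mul_X_pow {A α : Type*} [CommRing A] [DecidableEq α] (w : ℕ → A)
    (s : Finset α) :
    ∑ σ : Finpartition s, C (∏ B ∈ σ.parts, w #B) * X ^ #σ.parts = aPoly w #s := by
  rw [sum_finpartition_eq_sum_fin w s fun a k => C a * X ^ k, aPoly_eq_sum]
  rfl

lemma opOf_muTop_aPoly_succ {w : ℕ → R} (hw : w 1 = 1) (n : ℕ) :
    opOf (muTop w) (aPoly w (n + 1)) = (n + 1) • aPoly w n := by
  refine add_left_cancel (a := aPoly w (n + 1)) ?_
  rw [aPoly_add_opOf_muTop_eq_sum, Finpartition.sum_sum_powerset_parts _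
    fun T S => C (∏ B ∈ T, w #B) * X ^ #T * C ((∏ B ∈ S, w #B) * muTop w #S)]
  simp_rw [← sum_mul_sum, ← map_sum, sum_finpartition_C_mul_X_pow,
    sum_finpartition_prod_mul_muTop hw, card_univ_sdiff, Fintype.card_fin]
  rw [sum_powerset_apply_card (fun k => aPoly w (n + 1 - k) * C (if k ≤ 1 then 1 else 0)),
    card_univ, Fintype.card_fin, sum_range_succ', sum_range_succ', sum_eq_zero fun k _ => by simp]
  simp [add_comm]

end Main

/-- The zeta-type enumerators form the basic sequence of
`Δ = ∑_{k ≥ 1} (µ^w_k / k!) D^k`:  `a_n(0; w) = 0` and `Δ a_n = n a_{n-1}` for `n ≥ 1`. -/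
theorem aPoly_basic (w : ℕ → R) (hw : w 1 = 1) :
    (∀ n : ℕ, 1 ≤ n → (aPoly w n).eval (0 : R) = 0) ∧
    (∀ n : ℕ, 1 ≤ n → opOf (muTop w) (aPoly w n) = (n : R) • aPoly w (n - 1)) := by
  refine ⟨fun n hn => eval_zero_aPoly w (by omega), fun n hn => ?_⟩
  obtain ⟨m, rfl⟩ := Nat.exists_eq_add_of_le' hn
  rw [Nat.add_sub_cancel, Nat.cast_smul_eq_nsmul]
  exact opOf_muTop_aPoly_succ hw m
end

section
/- Let z_0 ≤ z_1 ≤ ⋯ ≤ z_{n−1} be positive integers, and let t_n be the generalized Gončarov polynomials associated with the sequence p_n(x) = x^n and the grid −Z = (−z_0, −z_1, …, −z_{n−1}), i.e., t_0 = 1 and t_n(x) = x^n − Σ_{i=0}^{n−1} C(n,i) · (−z_i)^{n−i} · t_i(x). Then t_n(0) equals the number of z⃗-parking functions of length n. -/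
open Finset

/-- The generalized Gončarov polynomials associated with the sequence `p` and the grid `Z`,
via the recurrence `t_n(x; Z) = p_n(x) - ∑_{i<n} C(n,i) p_{n-i}(z_i) t_i(x; Z)`
(with `t_0 = p_0 = 1`). -/
noncomputable def gonc {S : Type*} [CommRing S] (p : ℕ → S → S) (Z : ℕ → S) (n : ℕ) (x : S) : S :=
  p n x - ∑ i ∈ (Finset.range n).attach,
    (n.choose i.1 : S) * p (n - i.1) (Z i.1) * gonc p Z i.1 x
termination_by n
decreasing_by exact Finset.mem_range.mp i.2

/-- `f : Fin n → ℕ` is a `z⃗`-parking function: all entries are positive, and for each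
`i < n` at least `i + 1` of the entries are `≤ z i`. -/
def IsParking {n : ℕ} (z : ℕ → ℕ) (f : Fin n → ℕ) : Prop :=
  (∀ j, 1 ≤ f j) ∧
    ∀ i : Fin n, (i : ℕ) + 1 ≤ (univ.filter fun j => f j ≤ z (i : ℕ)).card

/-!
Fix `m ≥ z_0, …, z_{n-1}` and count the maps `f : Fin n → [1, m]`. Every such `f` has a unique
*parking core* `S`: the restriction of `f` to `S` is a `z⃗`-parking function of length `|S|` and
all other entries of `f` exceed `z_{|S|}` (take `S = {j | f j ≤ z_i}` for the least `i` with at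
most `i` such entries, or all of `Fin n` if there is none). Hence
`m ^ n = ∑ i, C(n,i) · PF_i · (m - z_i) ^ (n - i)` for all large `m`, so as polynomials in `m`;
at `m = 0` this is the recursion defining `t_n(0)`.
-/

section Parking

variable {κ ι : Type*} [Fintype κ] [Fintype ι] (z : ℕ → ℕ)

def IsParkingOn (f : κ → ℕ) : Prop :=
  (∀ j, 1 ≤ f j) ∧ ∀ k < Fintype.card κ, k + 1 ≤ #{j | f j ≤ z k}

noncomputable def parkingCount (n : ℕ) : ℕ :=
  Nat.card {f : Fin n → ℕ // IsParking z f}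

omit [Fintype ι] in
lemma card_filter_coe (S : Finset ι) (p : ι → Prop) [DecidablePred p] :
    #{j : S | p j} = #{j ∈ S | p j} := by
  rw [univ_eq_attach, filter_attach, card_map, card_attach]

omit [Fintype ι] in
lemma card_filter_comp_embedding [DecidableEq ι] (e : κ ↪ ι) (p : ι → Prop)
    [DecidablePred p] :
    #{k | p (e k)} = #{j ∈ univ.map e | p j} := by
  rw [filter_map, card_map]
  rfl

lemma isParkingOn_comp_equiv (e : κ ≃ ι) {f : ι → ℕ} :
    IsParkingOn z (f ∘ e) ↔ IsParkingOn z f := by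
  classical
  have hcard (k : ℕ) : #{i | f (e i) ≤ z k} = #{j | f j ≤ z k} := by
    simpa using card_filter_comp_embedding e.toEmbedding (fun j => f j ≤ z k)
  simp only [IsParkingOn, Function.comp_apply, hcard, Fintype.card_congr e, e.forall_congr_left,
    Equiv.apply_symm_apply]

lemma isParkingOn_iff_isParking {n : ℕ} (f : Fin n → ℕ) :
    IsParkingOn z f ↔ IsParking z f := by
  simp [IsParkingOn, IsParking, Fin.forall_iff]

lemma natCard_isParkingOn :
    Nat.card {f : κ → ℕ // IsParkingOn z f} = parkingCount z (Fintype.card κ) := by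
  let e := Fintype.equivFin κ
  refine Nat.card_congr (Equiv.trans ((e.arrowCongr (Equiv.refl ℕ)).subtypeEquiv fun f => ?_)
    (Equiv.subtypeEquivRight (isParkingOn_iff_isParking z)))
  exact (isParkingOn_comp_equiv z e.symm).symm

variable {z} in
lemma IsParkingOn.apply_le {f : κ → ℕ} (hf : IsParkingOn z f) (j : κ) :
    f j ≤ z (Fintype.card κ - 1) := by
  have hpos : 0 < Fintype.card κ := Fintype.card_pos_iff.2 ⟨j⟩
  have hlast := hf.2 _ (Nat.sub_lt hpos one_pos)
  have hall : #{i | f i ≤ z (Fintype.card κ - 1)} = #(univ : Finset κ) :=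
    le_antisymm (card_filter_le _ _) (by rw [card_univ]; omega)
  exact card_filter_eq_iff.1 hall j (mem_univ j)

lemma natCard_forall_mem (s : Finset ℕ) :
    Nat.card {f : κ → ℕ // ∀ j, f j ∈ s} = #s ^ Fintype.card κ := by
  simp [Nat.card_congr (Equiv.subtypePiEquivPi (β := fun _ : κ => ℕ) (p := fun _ b => b ∈ s)),
    Nat.card_pi]

end Parking

section ParkingCore

variable {ι : Type*} [Fintype ι] (z : ℕ → ℕ)

def IsParkingCore (S : Finset ι) (f : ι → ℕ) : Prop :=
  IsParkingOn z (fun j : S => f j) ∧ ∀ j ∉ S, z #S < f j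

variable {z} {S T : Finset ι} {f : ι → ℕ}

lemma IsParkingCore.lt_card_filter (h : IsParkingCore z S f) {k : ℕ} (hk : k < #S) :
    k < #{j | f j ≤ z k} := by
  have hS : k + 1 ≤ #{j : S | f j ≤ z k} := h.1.2 k (by simpa using hk)
  rw [card_filter_coe S fun j => f j ≤ z k] at hS
  exact hS.trans (card_le_card (filter_subset_filter _ (subset_univ S)))

lemma IsParkingCore.filter_subset (h : IsParkingCore z S f) :
    ({j | f j ≤ z #S} : Finset ι) ⊆ S :=
  fun j hj => by_contra fun hjS => (h.2 j hjS).not_ge (mem_filter.1 hj).2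

lemma IsParkingCore.eq_filter (hz : MonotoneOn z (Set.Iio (Fintype.card ι)))
    (h : IsParkingCore z S f) (hS : #S < Fintype.card ι) :
    S = ({j | f j ≤ z #S} : Finset ι) := by
  refine Subset.antisymm (fun j hj => mem_filter.2 ⟨mem_univ j, ?_⟩) h.filter_subset
  have hle := h.1.apply_le ⟨j, hj⟩
  rw [Fintype.card_coe] at hle
  exact hle.trans (hz (by simp; omega) (by simpa using hS) (Nat.sub_le _ _))

lemma IsParkingCore.unique (hz : MonotoneOn z (Set.Iio (Fintype.card ι)))
    (hS : IsParkingCore z S f) (hT : IsParkingCore z T f) : S = T := by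
  have hcard : #S = #T := by
    by_contra hne
    rcases lt_or_gt_of_ne hne with hlt | hlt
    · exact (hT.lt_card_filter hlt).not_ge (card_le_card hS.filter_subset)
    · exact (hS.lt_card_filter hlt).not_ge (card_le_card hT.filter_subset)
  rcases (card_le_univ S).lt_or_eq with hlt | heq
  · rw [hS.eq_filter hz hlt, hT.eq_filter hz (hcard ▸ hlt), hcard]
  · rw [eq_univ_of_card S heq, eq_univ_of_card T (hcard ▸ heq)]

lemma exists_isParkingCore (hz : MonotoneOn z (Set.Iio (Fintype.card ι)))
    (hf : ∀ j, 1 ≤ f j) : ∃ S, IsParkingCore z S f := by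
  have hP : ∃ i, Fintype.card ι ≤ i ∨ #{j | f j ≤ z i} ≤ i := ⟨_, .inl le_rfl⟩
  have hmin (k : ℕ) (hk : k < Nat.find hP) : k < Fintype.card ι ∧ k < #{j | f j ≤ z k} := by
    simpa [not_or, not_le] using Nat.find_min hP hk
  by_cases hn : Fintype.card ι ≤ Nat.find hP
  · refine ⟨univ, ⟨fun j => hf j, fun k hk => ?_⟩, by simp⟩
    change k + 1 ≤ #{j : (univ : Finset ι) | f j ≤ z k}
    rw [card_filter_coe univ fun j => f j ≤ z k]
    simp only [Fintype.card_coe, card_univ] at hk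
    exact (hmin k (by omega)).2
  set i := Nat.find hP
  have hzi {k : ℕ} (hk : k ≤ i) : z k ≤ z i := hz (by simp; omega) (by simp; omega) hk
  have hcard : #{j | f j ≤ z i} = i := by
    refine le_antisymm ((Nat.find_spec hP).resolve_left hn) ?_
    rcases Nat.eq_zero_or_pos i with h0 | h0
    · omega
    · have := (hmin (i - 1) (by omega)).2.trans_le
        (card_le_card (monotone_filter_right _ fun _ _ hj => hj.trans (hzi (Nat.sub_le i 1))))
      omega
  refine ⟨({j | f j ≤ z i} : Finset ι), ⟨fun j => hf j, fun k hk => ?_⟩, fun j hj => ?_⟩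
  · rw [Fintype.card_coe, hcard] at hk
    have hfilter : ({j ∈ ({j | f j ≤ z i} : Finset ι) | f j ≤ z k} : Finset ι) =
        ({j | f j ≤ z k} : Finset ι) := by
      ext j
      simp only [mem_filter, mem_univ, true_and, and_iff_right_iff_imp]
      exact fun hj => hj.trans (hzi hk.le)
    change k + 1 ≤ #{j : ({j | f j ≤ z i} : Finset ι) | f j ≤ z k}
    rw [card_filter_coe _ fun j => f j ≤ z k, hfilter]
    exact (hmin k hk).2
  · simpa [hcard] using hj

end ParkingCore

section Counting

variable {ι : Type*} [Fintype ι] (z : ℕ → ℕ) {m : ℕ}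

lemma natCard_isParkingCore (S : Finset ι) (hm : ∀ k < #S, z k ≤ m) :
    Nat.card {f : ι → ℕ // (∀ j, f j ∈ Icc 1 m) ∧ IsParkingCore z S f}
      = parkingCount z #S * (m - z #S) ^ (Fintype.card ι - #S) := by
  classical
  have hsplit (f : ι → ℕ) : ((∀ j, f j ∈ Icc 1 m) ∧ IsParkingCore z S f) ↔
      IsParkingOn z (fun j : S => f j) ∧ ∀ j : {j // j ∉ S}, f j ∈ Ioc (z #S) m := by
    constructor
    · rintro ⟨hbox, hpark, hout⟩
      exact ⟨hpark, fun j => mem_Ioc.2 ⟨hout j j.2, (mem_Icc.1 (hbox j)).2⟩⟩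
    · rintro ⟨hpark, hout⟩
      refine ⟨fun j => ?_, hpark, fun j hj => (mem_Ioc.1 (hout ⟨j, hj⟩)).1⟩
      by_cases hj : j ∈ S
      · have hle := hpark.apply_le ⟨j, hj⟩
        rw [Fintype.card_coe] at hle
        exact mem_Icc.2 ⟨hpark.1 ⟨j, hj⟩,
          hle.trans (hm _ (Nat.sub_lt (card_pos.2 ⟨j, hj⟩) one_pos))⟩
      · have hj' := mem_Ioc.1 (hout ⟨j, hj⟩)
        exact mem_Icc.2 ⟨Nat.one_le_of_lt hj'.1, hj'.2⟩
  let e := ((Equiv.piEquivPiSubtypeProd (· ∈ S) fun _ => ℕ).subtypeEquiv hsplit).trans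
    (Equiv.subtypeProdEquivProd (p := IsParkingOn z)
      (q := fun h : {j // j ∉ S} → ℕ => ∀ j, h j ∈ Ioc (z #S) m))
  rw [Nat.card_congr e, Nat.card_prod, natCard_isParkingOn, natCard_forall_mem, Nat.card_Ioc]
  simp

theorem pow_card_eq_sum_parkingCount (hz : MonotoneOn z (Set.Iio (Fintype.card ι)))
    (hm : ∀ k < Fintype.card ι, z k ≤ m) :
    m ^ Fintype.card ι = ∑ i ∈ range (Fintype.card ι + 1),
      (Fintype.card ι).choose i * parkingCount z i * (m - z i) ^ (Fintype.card ι - i) := by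
  let Box := {f : ι → ℕ // ∀ j, f j ∈ Icc 1 m}
  have hcore (f : Box) : ∃! S, IsParkingCore z S f :=
    let ⟨S, hS⟩ := exists_isParkingCore hz fun j => (mem_Icc.1 (f.2 j)).1
    ⟨S, hS, fun _ hT => hT.unique hz hS⟩
  choose core hcore_spec hcore_unique using hcore
  have : Finite Box := Finite.of_equiv _
    (Equiv.subtypePiEquivPi (β := fun _ : ι => ℕ) (p := fun _ b => b ∈ Icc 1 m)).symm
  calc m ^ Fintype.card ι = Nat.card Box := by
        rw [natCard_forall_mem, Nat.card_Icc, Nat.add_sub_cancel]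
    _ = ∑ S, Nat.card {f : Box // core f = S} := by
      rw [← Nat.card_sigma, Nat.card_congr (Equiv.sigmaFiberEquiv core)]
    _ = ∑ S : Finset ι, parkingCount z #S * (m - z #S) ^ (Fintype.card ι - #S) := by
      refine sum_congr rfl fun S _ => ?_
      rw [← natCard_isParkingCore z S fun k hk => hm k (hk.trans_le (card_le_univ S))]
      exact Nat.card_congr ((Equiv.subtypeEquivRight fun f =>
        ⟨fun h => h ▸ hcore_spec f, fun h => (hcore_unique f S h).symm⟩).trans
        (Equiv.subtypeSubtypeEquivSubtypeInter _ (IsParkingCore z S)))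
    _ = _ := by
      rw [← powerset_univ,
        sum_powerset_apply_card fun i => parkingCount z i * (m - z i) ^ (Fintype.card ι - i)]
      simp [mul_assoc]

end Counting

theorem gonc_eq_sub_sum {S : Type*} [CommRing S] (p : ℕ → S → S) (Z : ℕ → S) (n : ℕ)
    (x : S) :
    gonc p Z n x = p n x - ∑ i ∈ range n, n.choose i * p (n - i) (Z i) * gonc p Z i x := by
  rw [gonc, sum_attach (range n) fun i => (n.choose i : S) * p (n - i) (Z i) * gonc p Z i x]

section Recursion

open Polynomial

variable {R : Type*} [CommRing R] {z : ℕ → ℕ} {n : ℕ}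

lemma cast_pow_eq_sum_parkingCount (hz : MonotoneOn z (Set.Iio n)) {m : ℕ}
    (hm : ∀ k < n, z k ≤ m) :
    (m : R) ^ n = ∑ i ∈ range (n + 1),
      n.choose i * ((m : R) - z i) ^ (n - i) * parkingCount z i := by
  have hcount :=
    pow_card_eq_sum_parkingCount (ι := Fin n) z (by simpa using hz) (by simpa using hm)
  rw [Fintype.card_fin] at hcount
  rw [← Nat.cast_pow, hcount, Nat.cast_sum]
  refine sum_congr rfl fun i hi => ?_
  rcases (Nat.lt_succ_iff.1 (mem_range.1 hi)).lt_or_eq with hi | rfl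
  · push_cast [Nat.cast_sub (hm i hi)]
    ring
  · simp

theorem pow_eq_sum_parkingCount [IsDomain R] [CharZero R] (hz : MonotoneOn z (Set.Iio n))
    (x : R) :
    x ^ n = ∑ i ∈ range (n + 1), n.choose i * (x - z i) ^ (n - i) * parkingCount z i := by
  suffices h : (X ^ n : R[X]) = ∑ i ∈ range (n + 1),
      (n.choose i : R[X]) * (X - (z i : R[X])) ^ (n - i) * (parkingCount z i : R[X]) by
    simpa [eval_finsetSum] using congrArg (eval x) h
  refine eq_of_infinite_eval_eq _ _ (((Set.Ici_infinite ((range n).sup z)).image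
    Nat.cast_injective.injOn).mono ?_)
  rintro _ ⟨m, hm, rfl⟩
  simpa [eval_finsetSum] using
    cast_pow_eq_sum_parkingCount hz fun k hk => (le_sup (mem_range.2 hk)).trans hm

theorem parkingCount_eq_sub_sum [IsDomain R] [CharZero R] (hz : MonotoneOn z (Set.Iio n)) :
    (parkingCount z n : R) =
      0 ^ n - ∑ i ∈ range n, n.choose i * (-(z i : R)) ^ (n - i) * parkingCount z i := by
  have h := pow_eq_sum_parkingCount hz (0 : R)
  rw [sum_range_succ, Nat.choose_self, Nat.sub_self, pow_zero] at h
  simp only [zero_sub] at h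
  rw [h]
  ring

theorem gonc_pow_neg_zero_eq_parkingCount [IsDomain R] [CharZero R]
    (hz : MonotoneOn z (Set.Iio n)) :
    gonc (fun m x => x ^ m) (fun i => -(z i : R)) n 0 = parkingCount z n := by
  induction n using Nat.strong_induction_on with
  | _ n ih =>
    rw [gonc_eq_sub_sum, parkingCount_eq_sub_sum hz]
    refine congrArg _ (sum_congr rfl fun i hi => ?_)
    rw [ih i (mem_range.1 hi) (hz.mono (Set.Iio_subset_Iio (mem_range.1 hi).le))]

end Recursion

theorem goncarov_counts_parking_general (n : ℕ) (z : ℕ → ℕ)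
    (hmono : ∀ i j, i ≤ j → j < n → z i ≤ z j) :
    gonc (fun m x => x ^ m) (fun i => -(z i : ℚ)) n (0 : ℚ)
      = (Nat.card { f : Fin n → ℕ // IsParking z f } : ℚ) :=
  gonc_pow_neg_zero_eq_parkingCount fun i _ j hj hij => hmono i j hij hj

/-- For `p_n(x) = x^n` and the grid `-Z = (-z_0, -z_1, …)`, the Gončarov polynomial
evaluated at `0` counts the `z⃗`-parking functions of length `n`. -/
theorem goncarov_counts_parking (n : ℕ) (z : ℕ → ℕ)
    (hpos : ∀ i < n, 0 < z i) (hmono : ∀ i j, i ≤ j → j < n → z i ≤ z j) :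
    gonc (fun m x => x ^ m) (fun i => -(z i : ℚ)) n (0 : ℚ)
      = (Nat.card { f : Fin n → ℕ // IsParking z f } : ℚ) :=
  goncarov_counts_parking_general n z hmono
end
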